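/- arXiv:1711.08107 — 2 statements merged into one kernel-verified Lean document; each statement's English description precedes it below -/
import Mathlib

section
/- Assume that for each k ≥ 2 the limit α_k = lim_{n→∞} f(n,k)^{1/n} exists. Then the sequence (α_k) is nonincreasing, converges to some α ≥ 0, and lim_{n→∞} f(n)^{1/n} exists and equals α. -/
open Finset Filter
open scoped Classical

/-- A finite set of naturals is primitive: no element divides another distinct element. -/
def Primitive (S : Finset ℕ) : Prop := ∀ a ∈ S, ∀ b ∈ S, a ≠ b → ¬ a ∣ b

/-- `f n` is the number of primitive subsets of `{1,...,n}`. -/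
noncomputable def f (n : ℕ) : ℕ :=
  ((Finset.Icc 1 n).powerset.filter Primitive).card

/-- A natural is `k`-smooth: all its prime factors are at most the `k`-th prime. -/
def SmoothNat (k m : ℕ) : Prop := ∀ p, p.Prime → p ∣ m → p ≤ Nat.nth Nat.Prime (k - 1)

/-- A set is `k`-core: no two distinct elements `a ∣ b` with `b/a` having all
prime factors at most the `k`-th prime. -/
def KCore (k : ℕ) (S : Finset ℕ) : Prop :=
  ∀ a ∈ S, ∀ b ∈ S, a ≠ b → ¬ (a ∣ b ∧ SmoothNat k (b / a))

/-- `fk n k` is the number of `k`-core subsets of `{1,...,n}`. -/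
noncomputable def fk (n k : ℕ) : ℕ :=
  ((Finset.Icc 1 n).powerset.filter (KCore k)).card

/-- `Dk k` is the product of the first `k` primes. -/
noncomputable def Dk (k : ℕ) : ℕ := ∏ i ∈ Finset.range k, Nat.nth Nat.Prime i

/-- `Pk k x` is the number of primitive subsets of the set of `k`-smooth integers in `{1,...,x}`. -/
noncomputable def Pk (k x : ℕ) : ℕ :=
  (((Finset.Icc 1 x).filter (SmoothNat k)).powerset.filter Primitive).card

/-! Every primitive set is `k`-core, and `k`-core sets are `j`-core for `j ≤ k`, so
`f n ≤ fk n (k + 1) ≤ fk n k`. Conversely, removing from a `k`-core subset of `{1,…,n}` its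
elements `≤ n / k` leaves a primitive set: for the remaining `a ∣ b` the quotient `b / a` is
below `k`, hence `k`-smooth. So `fk n k ≤ 2 ^ (n / k) * f n`, and after taking `n`-th roots
`f n ^ (1/n)` is eventually squeezed between `(α k - ε) / 2 ^ (1/k)` and `α k + ε`; letting
`k → ∞` gives the limit. -/

lemma smoothNat_of_pos_of_lt {k m : ℕ} (hm : 0 < m) (hmk : m < k) : SmoothNat k m :=
  fun _ _ hp => (Nat.le_of_dvd hm hp).trans <|
    (Nat.le_sub_one_of_lt hmk).trans (Nat.nth_strictMono Nat.infinite_setOfPred_prime).le_apply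

lemma smoothNat_mono {k l m : ℕ} (hkl : k ≤ l) (hm : SmoothNat k m) : SmoothNat l m :=
  fun p hp hpm => (hm p hp hpm).trans <|
    (Nat.nth_le_nth Nat.infinite_setOfPred_prime).mpr (Nat.sub_le_sub_right hkl 1)

lemma KCore.anti {k l : ℕ} {S : Finset ℕ} (hkl : k ≤ l) (hS : KCore l S) : KCore k S :=
  fun a ha b hb hab hdvd => hS a ha b hb hab ⟨hdvd.1, smoothNat_mono hkl hdvd.2⟩

lemma KCore.primitive_sdiff {k n : ℕ} {S : Finset ℕ} (hk : 0 < k) (hSn : S ⊆ Icc 1 n)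
    (hS : KCore k S) : Primitive (S \ Icc 1 (n / k)) := by
  intro a ha b hb hab hdvd
  obtain ⟨haS, ha_small⟩ := mem_sdiff.mp ha
  have hbS := (mem_sdiff.mp hb).1
  have ha1 := (mem_Icc.mp (hSn haS)).1
  obtain ⟨hb1, hbn⟩ := mem_Icc.mp (hSn hbS)
  have hna : n < a * k := by
    simp only [mem_Icc, not_and, not_le] at ha_small
    exact (Nat.div_lt_iff_lt_mul hk).mp (ha_small ha1)
  have hquot_lt : b / a < k := (Nat.div_lt_iff_lt_mul ha1).mpr (by linarith)
  have hquot_pos : 0 < b / a := Nat.div_pos (Nat.le_of_dvd hb1 hdvd) ha1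
  exact hS a haS b hbS hab ⟨hdvd, smoothNat_of_pos_of_lt hquot_pos hquot_lt⟩

lemma Finset.card_le_two_pow_mul_of_sdiff_mem {α : Type*} [DecidableEq α]
    {𝒜 ℬ : Finset (Finset α)} (T : Finset α) (h : ∀ S ∈ 𝒜, S \ T ∈ ℬ) :
    #𝒜 ≤ 2 ^ #T * #ℬ := by
  calc #𝒜 ≤ #(ℬ ×ˢ T.powerset) := by
        refine card_le_card_of_injOn (fun S => (S \ T, S ∩ T)) ?_ ?_
        · intro S hS
          exact mem_product.2 ⟨h S hS, mem_powerset.2 inter_subset_right⟩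
        · intro S₁ _ S₂ _ hS
          simp only [Prod.mk.injEq] at hS
          rw [← sdiff_union_inter S₁ T, ← sdiff_union_inter S₂ T, hS.1, hS.2]
    _ = 2 ^ #T * #ℬ := by rw [card_product, card_powerset, mul_comm]

lemma f_le_fk (n k : ℕ) : f n ≤ fk n k :=
  card_le_card <| monotone_filter_right _ fun _ _ hS a ha b hb hab hdvd => hS a ha b hb hab hdvd.1

lemma fk_antitone (n : ℕ) : Antitone (fk n) := fun _ _ hkl =>
  card_le_card <| monotone_filter_right _ fun _ _ => KCore.anti hkl

lemma fk_le_two_pow_mul_f (n : ℕ) {k : ℕ} (hk : 0 < k) : fk n k ≤ 2 ^ (n / k) * f n := by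
  have := card_le_two_pow_mul_of_sdiff_mem (Icc 1 (n / k))
    (𝒜 := (Icc 1 n).powerset.filter (KCore k)) (ℬ := (Icc 1 n).powerset.filter Primitive)
    fun S hS => by
      rw [mem_filter, mem_powerset] at hS ⊢
      exact ⟨sdiff_subset.trans hS.1, hS.2.primitive_sdiff hk hS.1⟩
  simpa [fk, f] using this

lemma tendsto_of_le_of_le_mul_family {u c α : ℕ → ℝ} {v : ℕ → ℕ → ℝ} {A : ℝ}
    (hv : ∀ᶠ k in atTop, Tendsto (v k) atTop (nhds (α k)))
    (hα : Tendsto α atTop (nhds A)) (hc : Tendsto c atTop (nhds 1))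
    (hle : ∀ k n, u n ≤ v k n) (hle_mul : ∀ᶠ k in atTop, ∀ n, v k n ≤ u n * c k) :
    Tendsto u atTop (nhds A) := by
  rw [tendsto_order]
  constructor
  · intro b hb
    have hαc : Tendsto (fun k => α k / c k) atTop (nhds A) := by
      rw [← div_one A]
      exact hα.div hc one_ne_zero
    obtain ⟨k, hbk, hck, hvk, hk⟩ := ((hαc.eventually_const_lt hb).and
      ((hc.eventually_const_lt one_pos).and (hv.and hle_mul))).exists
    filter_upwards [hvk.eventually_const_lt ((lt_div_iff₀ hck).mp hbk)] with n hn
    exact lt_of_mul_lt_mul_right (hn.trans_le (hk n)) hck.le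
  · intro b hb
    obtain ⟨k, hαk, hvk⟩ := ((hα.eventually_lt_const hb).and hv).exists
    filter_upwards [hvk.eventually_lt_const hαk] with n hn
    exact (hle k n).trans_lt hn

lemma tendsto_two_rpow_one_div : Tendsto (fun k : ℕ => (2 : ℝ) ^ ((1 : ℝ) / k)) atTop (nhds 1) := by
  simpa using tendsto_const_nhds.rpow tendsto_one_div_atTop_nhds_zero_nat (Or.inl two_ne_zero)

lemma f_rpow_le_fk_rpow (n k : ℕ) : (f n : ℝ) ^ ((1 : ℝ) / n) ≤ (fk n k : ℝ) ^ ((1 : ℝ) / n) :=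
  Real.rpow_le_rpow (by positivity) (by exact_mod_cast f_le_fk n k) (by positivity)

lemma fk_rpow_le_f_rpow_mul (n : ℕ) {k : ℕ} (hk : 0 < k) :
    (fk n k : ℝ) ^ ((1 : ℝ) / n) ≤ (f n : ℝ) ^ ((1 : ℝ) / n) * 2 ^ ((1 : ℝ) / k) := by
  have hexp : ((n / k : ℕ) : ℝ) * (1 / n) ≤ 1 / k := by
    rcases n.eq_zero_or_pos with rfl | hn
    · simp
    calc ((n / k : ℕ) : ℝ) * (1 / n) ≤ (n / k : ℝ) * (1 / n) := by gcongr; exact Nat.cast_div_le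
      _ = 1 / k := by field_simp
  calc (fk n k : ℝ) ^ ((1 : ℝ) / n) ≤ ((f n : ℝ) * 2 ^ (n / k)) ^ ((1 : ℝ) / n) := by
        gcongr
        exact_mod_cast (fk_le_two_pow_mul_f n hk).trans_eq (mul_comm _ _)
    _ = (f n : ℝ) ^ ((1 : ℝ) / n) * 2 ^ (((n / k : ℕ) : ℝ) * (1 / n)) := by
        rw [Real.mul_rpow (by positivity) (by positivity), ← Real.rpow_natCast,
          ← Real.rpow_mul zero_le_two]
    _ ≤ (f n : ℝ) ^ ((1 : ℝ) / n) * 2 ^ ((1 : ℝ) / k) := by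
        gcongr
        exact one_le_two

/-- If for each `k ≥ 2` the limit `α_k = lim_n f(n,k)^{1/n}` exists, then the
`α_k` are nonincreasing, converge to some `α ≥ 0`, and `lim_n f(n)^{1/n}` exists
and equals `α`. -/
theorem stmt_14 (α : ℕ → ℝ)
    (h : ∀ k, 2 ≤ k →
      Tendsto (fun n : ℕ => (fk n k : ℝ) ^ ((1 : ℝ) / n)) atTop (nhds (α k))) :
    (∀ k, 2 ≤ k → α (k + 1) ≤ α k) ∧
    ∃ A : ℝ, 0 ≤ A ∧ Tendsto (fun k : ℕ => α (k + 2)) atTop (nhds A) ∧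
      Tendsto (fun n : ℕ => (f n : ℝ) ^ ((1 : ℝ) / n)) atTop (nhds A) := by
  have hα_nonneg : ∀ k, 2 ≤ k → 0 ≤ α k := fun k hk =>
    ge_of_tendsto' (h k hk) fun _ => by positivity
  have hα_succ_le : ∀ k, 2 ≤ k → α (k + 1) ≤ α k := fun k hk =>
    le_of_tendsto_of_tendsto' (h (k + 1) (by omega)) (h k hk) fun n => by
      gcongr
      exact_mod_cast fk_antitone n k.le_succ
  have h_anti : Antitone fun j => α (j + 2) :=
    antitone_nat_of_succ_le fun j => hα_succ_le (j + 2) (by omega)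
  have h_bdd : BddBelow (Set.range fun j => α (j + 2)) :=
    ⟨0, by rintro _ ⟨j, rfl⟩; exact hα_nonneg _ (by omega)⟩
  have h_lim := tendsto_atTop_ciInf h_anti h_bdd
  refine ⟨hα_succ_le, _, le_ciInf fun j => hα_nonneg _ (by omega), h_lim, ?_⟩
  exact tendsto_of_le_of_le_mul_family (eventually_atTop.2 ⟨2, h⟩)
    ((tendsto_add_atTop_iff_nat 2).mp h_lim) tendsto_two_rpow_one_div
    (fun k n => f_rpow_le_fk_rpow n k)
    (eventually_atTop.2 ⟨1, fun _ hk n => fk_rpow_le_f_rpow_mul n hk⟩)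
end

section
/- For each fixed k ≥ 1, the limit lim_{n→∞} f(n,k)^{1/n} exists and equals the convergent infinite product ∏_{l=1}^{∞} P_k(l)^{(1/l − 1/(l+1))·φ(D)/D}, where D = p_1···p_k. -/
open Finset Filter
open scoped Classical

/-! Write `D` for the product of the first `k` primes. Every `m ≥ 1` factors uniquely as
`m = s * t` with `s` smooth and `t` coprime to `D`. If `a ∣ b` with `b / a` smooth, then `a` and
`b` have the same rough part `t`, and on the fiber of `t` the relation is plain divisibility of
the smooth parts `s ≤ n / t`. Hence `f(n,k) = ∏_{t ≤ n, (t,D) = 1} P_k(⌊n/t⌋)`, so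
`(1/n) log f(n,k)` averages `log P_k(⌊n/t⌋)` over the `t` coprime to `D`. Among these,
`n (1/l - 1/(l+1)) φ(D)/D + O(D)` have `⌊n/t⌋ = l`, while
`log P_k(l) ≤ #{k-smooth numbers ≤ l} · log 2 = O((log l)^k) = O(√l)`. This bound makes the
series converge and bounds the contribution of the `t` with `⌊n/t⌋ > L` by `O(1/√L)`,
uniformly in `n`. -/

lemma Dk_pos (k : ℕ) : 0 < Dk k :=
  Finset.prod_pos fun i _ => (Nat.prime_nth_prime i).pos

lemma prime_le_nth_iff {k q : ℕ} (hk : 1 ≤ k) (hq : q.Prime) :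
    q ≤ Nat.nth Nat.Prime (k - 1) ↔ ∃ i < k, Nat.nth Nat.Prime i = q := by
  constructor
  · intro h
    refine ⟨Nat.count Nat.Prime q, ?_, Nat.nth_count hq⟩
    have := (Nat.nth_le_nth Nat.infinite_setOfPred_prime).mp ((Nat.nth_count hq).trans_le h)
    omega
  · rintro ⟨i, hi, rfl⟩
    exact (Nat.nth_le_nth Nat.infinite_setOfPred_prime).mpr (by omega)

lemma prime_dvd_Dk_iff {k q : ℕ} (hk : 1 ≤ k) (hq : q.Prime) :
    q ∣ Dk k ↔ q ≤ Nat.nth Nat.Prime (k - 1) := by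
  simp only [Dk, hq.prime.dvd_finsetProd_iff, Finset.mem_range, prime_le_nth_iff hk hq,
    Nat.prime_dvd_prime_iff_eq hq (Nat.prime_nth_prime _), eq_comm]

lemma smoothNat_iff {k m : ℕ} (hk : 1 ≤ k) :
    SmoothNat k m ↔ ∀ q, q.Prime → q ∣ m → q ∣ Dk k :=
  forall₃_congr fun _ hq _ => (prime_dvd_Dk_iff hk hq).symm

lemma SmoothNat.of_dvd {k s d : ℕ} (hs : SmoothNat k s) (hd : d ∣ s) : SmoothNat k d :=
  fun q hq hqd => hs q hq (hqd.trans hd)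

lemma SmoothNat.mul {k s t : ℕ} (hs : SmoothNat k s) (ht : SmoothNat k t) :
    SmoothNat k (s * t) :=
  fun q hq hqst => ((Nat.Prime.dvd_mul hq).mp hqst).elim (hs q hq) (ht q hq)

lemma SmoothNat.coprime {k s t : ℕ} (hk : 1 ≤ k) (hs : SmoothNat k s)
    (ht : (Dk k).Coprime t) : s.Coprime t :=
  Nat.coprime_of_dvd fun q hq hqs hqt =>
    Nat.not_coprime_of_dvd_of_dvd hq.one_lt ((smoothNat_iff hk).mp hs q hq hqs) hqt ht

lemma SmoothNat.eq_of_mul_eq_mul {k s t s' t' : ℕ} (hk : 1 ≤ k) (hs : SmoothNat k s)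
    (hs' : SmoothNat k s') (ht : (Dk k).Coprime t) (ht' : (Dk k).Coprime t')
    (h : s * t = s' * t') : s = s' :=
  Nat.dvd_antisymm ((hs.coprime hk ht').dvd_of_dvd_mul_right (h ▸ dvd_mul_right s t))
    ((hs'.coprime hk ht).dvd_of_dvd_mul_right (h ▸ dvd_mul_right s' t'))

/-- The power `Dk k ^ m` suffices: every prime exponent of `m` is less than `m`. -/
noncomputable def smoothPart (k m : ℕ) : ℕ := m.gcd (Dk k ^ m)

noncomputable def roughPart (k m : ℕ) : ℕ := m / smoothPart k m

lemma smoothPart_mul_roughPart (k m : ℕ) : smoothPart k m * roughPart k m = m :=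
  Nat.mul_div_cancel' (Nat.gcd_dvd_left _ _)

lemma smoothNat_smoothPart {k : ℕ} (hk : 1 ≤ k) (m : ℕ) : SmoothNat k (smoothPart k m) :=
  (smoothNat_iff hk).mpr fun _ hq hqs => hq.dvd_of_dvd_pow (hqs.trans (Nat.gcd_dvd_right _ _))

lemma coprime_roughPart (k : ℕ) {m : ℕ} (hm : m ≠ 0) : (Dk k).Coprime (roughPart k m) := by
  refine Nat.coprime_of_dvd fun q hq hqD hqr => Nat.pow_succ_factorization_not_dvd hm hq ?_
  have hpow : q ^ m.factorization q ∣ smoothPart k m :=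
    Nat.dvd_gcd (Nat.ordProj_dvd m q) ((pow_dvd_pow q (Nat.factorization_lt q hm).le).trans
      (pow_dvd_pow_of_dvd hqD m))
  have := mul_dvd_mul hpow hqr
  rwa [smoothPart_mul_roughPart, ← pow_succ] at this

lemma smoothPart_mul {k s t : ℕ} (hk : 1 ≤ k) (hs : SmoothNat k s) (ht : (Dk k).Coprime t)
    (hst : s * t ≠ 0) : smoothPart k (s * t) = s := by
  have hm := smoothPart_mul_roughPart k (s * t)
  exact (hs.eq_of_mul_eq_mul hk (smoothNat_smoothPart hk _) ht
    (coprime_roughPart k hst) hm.symm).symm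

lemma roughPart_mul {k s t : ℕ} (hk : 1 ≤ k) (hs : SmoothNat k s) (ht : (Dk k).Coprime t)
    (hst : s * t ≠ 0) : roughPart k (s * t) = t := by
  rw [roughPart, smoothPart_mul hk hs ht hst,
    Nat.mul_div_cancel_left t (Nat.pos_of_ne_zero (left_ne_zero_of_mul hst))]

lemma dvd_and_smoothNat_div_iff {k a b : ℕ} (hk : 1 ≤ k) (ha : a ≠ 0) (hb : b ≠ 0) :
    (a ∣ b ∧ SmoothNat k (b / a)) ↔ (roughPart k a = roughPart k b ∧ a ∣ b) := by
  constructor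
  · rintro ⟨⟨d, rfl⟩, hd⟩
    rw [Nat.mul_div_cancel_left d (Nat.pos_of_ne_zero ha)] at hd
    have hb' : a * d = (smoothPart k a * d) * roughPart k a := by
      conv_lhs => rw [← smoothPart_mul_roughPart k a]
      ring
    refine ⟨?_, dvd_mul_right a d⟩
    rw [hb', roughPart_mul hk ((smoothNat_smoothPart hk a).mul hd) (coprime_roughPart k ha)
      (hb' ▸ hb)]
  · rintro ⟨hr, hab⟩
    have hr0 : 0 < roughPart k a := Nat.pos_of_ne_zero fun h => ha (by
      rw [← smoothPart_mul_roughPart k a, h, mul_zero])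
    have hdiv : b / a = smoothPart k b / smoothPart k a := by
      conv_lhs => rw [← smoothPart_mul_roughPart k a, ← smoothPart_mul_roughPart k b, ← hr]
      exact Nat.mul_div_mul_right _ _ hr0
    have hsp : smoothPart k a ∣ smoothPart k b := by
      rw [← smoothPart_mul_roughPart k a, ← smoothPart_mul_roughPart k b, ← hr] at hab
      exact Nat.dvd_of_mul_dvd_mul_right hr0 hab
    exact ⟨hab, hdiv ▸ (smoothNat_smoothPart hk b).of_dvd (Nat.div_dvd_of_dvd hsp)⟩

lemma card_filter_powerset_biUnion {ι α : Type*} [DecidableEq α] (B : Finset ι) (A : ι → Finset α)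
    (Q : ι → Finset α → Prop) (hA : (B : Set ι).PairwiseDisjoint A) :
    #{S ∈ (B.biUnion A).powerset | ∀ t ∈ B, Q t (S ∩ A t)}
      = ∏ t ∈ B, #{T ∈ (A t).powerset | Q t T} := by
  classical
  induction B using Finset.induction_on with
  | empty => simp
  | @insert a B ha ih =>
    set U := B.biUnion A
    have hsub : ∀ t ∈ B, A t ⊆ U := fun t ht => Finset.subset_biUnion_of_mem A ht
    have hU : ∀ x ∈ A a, x ∉ U := by
      simp only [U, Finset.mem_biUnion, not_exists, not_and]
      exact fun x hx t ht hxt => Finset.disjoint_left.mp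
        (hA (by simp) (by simp [ht]) (by rintro rfl; exact ha ht)) hx hxt
    have inter_left {T₁ T₂ : Finset α} (h₁ : T₁ ⊆ A a) (h₂ : T₂ ⊆ U) :
        (T₁ ∪ T₂) ∩ A a = T₁ :=
      Finset.ext fun x => by grind
    have inter_right {T₁ T₂ : Finset α} (h₁ : T₁ ⊆ A a) (h₂ : T₂ ⊆ U) :
        (T₁ ∪ T₂) ∩ U = T₂ :=
      Finset.ext fun x => by grind
    have inter_block {T₁ T₂ : Finset α} (h₁ : T₁ ⊆ A a) {t : ι} (ht : t ∈ B) :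
        (T₁ ∪ T₂) ∩ A t = T₂ ∩ A t :=
      Finset.ext fun x => by grind
    rw [Finset.prod_insert ha, ← ih (hA.subset (by simp)), ← Finset.card_product]
    refine Finset.card_nbij' (fun S => (S ∩ A a, S ∩ U)) (fun T => T.1 ∪ T.2) ?_ ?_ ?_ ?_ <;>
      simp only [Set.MapsTo, Set.LeftInvOn, Finset.coe_filter, Finset.coe_product, Set.mem_prod,
        Set.mem_ofPred_eq, Finset.mem_powerset, Finset.biUnion_insert, Finset.forall_mem_insert,
        Prod.forall, Prod.mk.injEq]
    · rintro S ⟨-, hQa, hQB⟩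
      refine ⟨⟨Finset.inter_subset_right, hQa⟩, Finset.inter_subset_right, fun t ht => ?_⟩
      rw [Finset.inter_assoc, Finset.inter_eq_right.mpr (hsub t ht)]
      exact hQB t ht
    · rintro T₁ T₂ ⟨⟨h₁, hQ₁⟩, h₂, hQ₂⟩
      refine ⟨Finset.union_subset_union h₁ h₂, by rwa [inter_left h₁ h₂], fun t ht => ?_⟩
      rw [inter_block h₁ ht]
      exact hQ₂ t ht
    · rintro S ⟨hS, -⟩
      rw [← Finset.inter_union_distrib_left, Finset.inter_eq_left.mpr hS]
    · rintro T₁ T₂ ⟨⟨h₁, -⟩, h₂, -⟩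
      exact ⟨inter_left h₁ h₂, inter_right h₁ h₂⟩

lemma primitive_image_mul_iff {t : ℕ} (ht : 0 < t) {S : Finset ℕ} :
    Primitive (S.image (· * t)) ↔ Primitive S := by
  simp only [Primitive, Finset.forall_mem_image, ne_eq, mul_left_inj' ht.ne',
    Nat.mul_dvd_mul_iff_right ht]

lemma card_filter_primitive_image_mul {t : ℕ} (ht : 0 < t) (G : Finset ℕ) :
    #{S ∈ (G.image (· * t)).powerset | Primitive S} = #{S ∈ G.powerset | Primitive S} := by
  rw [Finset.powerset_image, Finset.filter_image,
    Finset.card_image_of_injective _ (Finset.image_injective (mul_left_injective₀ ht.ne'))]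
  simp only [primitive_image_mul_iff ht]

noncomputable def coprimeUpTo (D n : ℕ) : Finset ℕ := {t ∈ Icc 1 n | D.Coprime t}

noncomputable def roughFiber (k n t : ℕ) : Finset ℕ := {m ∈ Icc 1 n | roughPart k m = t}

lemma roughPart_mem_coprimeUpTo {k n m : ℕ} (hm : m ∈ Icc 1 n) :
    roughPart k m ∈ coprimeUpTo (Dk k) n := by
  rw [Finset.mem_Icc] at hm
  have hm0 : m ≠ 0 := by omega
  have hle := Nat.le_of_dvd (by omega) (Dvd.intro_left _ (smoothPart_mul_roughPart k m))
  have hpos : roughPart k m ≠ 0 :=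
    right_ne_zero_of_mul ((smoothPart_mul_roughPart k m).trans_ne hm0)
  simp only [coprimeUpTo, Finset.mem_filter, Finset.mem_Icc]
  exact ⟨⟨by omega, by omega⟩, coprime_roughPart k hm0⟩

lemma Icc_eq_biUnion_roughFiber (k n : ℕ) :
    Icc 1 n = (coprimeUpTo (Dk k) n).biUnion (roughFiber k n) := by
  ext m
  simp only [Finset.mem_biUnion, roughFiber, Finset.mem_filter]
  exact ⟨fun hm => ⟨_, roughPart_mem_coprimeUpTo hm, hm, rfl⟩, fun ⟨_, _, hm, _⟩ => hm⟩

lemma roughFiber_eq_image {k n t : ℕ} (hk : 1 ≤ k) (ht : t ∈ coprimeUpTo (Dk k) n) :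
    roughFiber k n t = {s ∈ Icc 1 (n / t) | SmoothNat k s}.image (· * t) := by
  simp only [coprimeUpTo, Finset.mem_filter, Finset.mem_Icc] at ht
  obtain ⟨⟨ht1, -⟩, htD⟩ := ht
  ext m
  simp only [roughFiber, Finset.mem_filter, Finset.mem_image, Finset.mem_Icc,
    Nat.le_div_iff_mul_le ht1]
  constructor
  · rintro ⟨⟨hm1, hmn⟩, rfl⟩
    have hm := smoothPart_mul_roughPart k m
    refine ⟨smoothPart k m, ⟨⟨Nat.pos_of_ne_zero ?_, by rwa [hm]⟩, smoothNat_smoothPart hk m⟩, hm⟩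
    intro h
    rw [h, zero_mul] at hm
    omega
  · rintro ⟨s, ⟨⟨hs1, hsn⟩, hs⟩, rfl⟩
    have hst : s * t ≠ 0 := by positivity
    exact ⟨⟨Nat.pos_of_ne_zero hst, hsn⟩, roughPart_mul hk hs htD hst⟩

lemma kCore_iff_forall_primitive {k n : ℕ} (hk : 1 ≤ k) {S : Finset ℕ} (hS : S ⊆ Icc 1 n) :
    KCore k S ↔ ∀ t ∈ coprimeUpTo (Dk k) n, Primitive (S ∩ roughFiber k n t) := by
  have hpos : ∀ m ∈ S, m ≠ 0 := fun m hm => by have := Finset.mem_Icc.mp (hS hm); omega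
  simp only [KCore, Primitive, roughFiber, Finset.mem_inter, Finset.mem_filter]
  constructor
  · rintro hK t - a ⟨ha, -, rfl⟩ b ⟨hb, -, hr⟩ hab hdvd
    exact hK a ha b hb hab
      ((dvd_and_smoothNat_div_iff hk (hpos a ha) (hpos b hb)).mpr ⟨hr.symm, hdvd⟩)
  · rintro hP a ha b hb hab hrel
    obtain ⟨hr, hdvd⟩ := (dvd_and_smoothNat_div_iff hk (hpos a ha) (hpos b hb)).mp hrel
    exact hP _ (roughPart_mem_coprimeUpTo (hS ha)) a ⟨ha, hS ha, rfl⟩ b ⟨hb, hS hb, hr.symm⟩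
      hab hdvd

lemma fk_eq_prod {k : ℕ} (hk : 1 ≤ k) (n : ℕ) :
    fk n k = ∏ t ∈ coprimeUpTo (Dk k) n, Pk k (n / t) := by
  have hdisj : ((coprimeUpTo (Dk k) n : Finset ℕ) : Set ℕ).PairwiseDisjoint (roughFiber k n) :=
    fun t _ u _ htu => Finset.disjoint_filter.mpr fun _ _ h h' => htu (h.symm.trans h')
  rw [fk, Finset.filter_congr fun S hS => kCore_iff_forall_primitive hk (Finset.mem_powerset.mp hS),
    Icc_eq_biUnion_roughFiber k n, card_filter_powerset_biUnion _ _ _ hdisj]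
  refine Finset.prod_congr rfl fun t ht => ?_
  have ht0 : 0 < t := (Finset.mem_Icc.mp (Finset.mem_filter.mp ht).1).1
  rw [roughFiber_eq_image hk ht, card_filter_primitive_image_mul ht0, Pk]

lemma factorization_le_log_two {m p : ℕ} (hm : m ≠ 0) (hp : p.Prime) :
    m.factorization p ≤ Nat.log 2 m :=
  Nat.le_log_of_pow_le one_lt_two ((Nat.pow_le_pow_left hp.two_le _).trans
    (Nat.le_of_dvd (Nat.pos_of_ne_zero hm) (Nat.ordProj_dvd m p)))

lemma SmoothNat.eq_of_factorization_nth_eq {k m m' : ℕ} (hk : 1 ≤ k) (hm : m ≠ 0) (hm' : m' ≠ 0)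
    (hs : SmoothNat k m) (hs' : SmoothNat k m')
    (h : ∀ i < k, m.factorization (Nat.nth Nat.Prime i) = m'.factorization (Nat.nth Nat.Prime i)) :
    m = m' := by
  refine Nat.eq_of_factorization_eq hm hm' fun p => ?_
  by_cases hp : p.Prime
  · by_cases hpk : p ≤ Nat.nth Nat.Prime (k - 1)
    · obtain ⟨i, hi, rfl⟩ := (prime_le_nth_iff hk hp).mp hpk
      exact h i hi
    · rw [Nat.factorization_eq_zero_of_not_dvd fun hd => hpk (hs p hp hd),
        Nat.factorization_eq_zero_of_not_dvd fun hd => hpk (hs' p hp hd)]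
  · simp [Nat.factorization_eq_zero_of_not_prime _ hp]

lemma card_smoothNat_le {k : ℕ} (hk : 1 ≤ k) (x : ℕ) :
    #{m ∈ Icc 1 x | SmoothNat k m} ≤ (Nat.log 2 x + 1) ^ k := by
  calc #{m ∈ Icc 1 x | SmoothNat k m}
      ≤ #(Fintype.piFinset fun _ : Fin k => range (Nat.log 2 x + 1)) := by
        refine Finset.card_le_card_of_injOn (fun m i => m.factorization (Nat.nth Nat.Prime i))
          (fun m hm => ?_) (fun m hm m' hm' h => ?_)
        · simp only [Finset.mem_coe, Finset.mem_filter, Finset.mem_Icc] at hm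
          simp only [Finset.mem_coe, Fintype.mem_piFinset, Finset.mem_range, Nat.lt_succ_iff]
          exact fun i => (factorization_le_log_two (by omega) (Nat.prime_nth_prime i)).trans
            (Nat.log_mono_right hm.1.2)
        · simp only [Finset.mem_coe, Finset.mem_filter, Finset.mem_Icc] at hm hm'
          exact hm.2.eq_of_factorization_nth_eq hk (by omega) (by omega) hm'.2
            fun i hi => congrFun h ⟨i, hi⟩
    _ = (Nat.log 2 x + 1) ^ k := by simp

lemma Pk_le_two_pow (k x : ℕ) : Pk k x ≤ 2 ^ #{m ∈ Icc 1 x | SmoothNat k m} :=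
  (Finset.card_filter_le _ _).trans (Finset.card_powerset _).le

lemma one_le_Pk (k x : ℕ) : 1 ≤ Pk k x :=
  Finset.card_pos.mpr ⟨∅, Finset.mem_filter.mpr ⟨Finset.empty_mem_powerset _, by simp [Primitive]⟩⟩

lemma natLog_two_add_one_le {ε : ℝ} (hε : 0 < ε) {x : ℕ} (hx : 1 ≤ x) :
    (Nat.log 2 x + 1 : ℝ) ≤ (1 / (ε * Real.log 2) + 1) * (x : ℝ) ^ ε := by
  have hlog2 : 0 < Real.log 2 := Real.log_pos one_lt_two
  have hx' : (1 : ℝ) ≤ x := by exact_mod_cast hx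
  have hlog : (Nat.log 2 x : ℝ) ≤ (x : ℝ) ^ ε / (ε * Real.log 2) := by
    calc (Nat.log 2 x : ℝ) ≤ Real.logb 2 x := Real.natLog_le_logb x 2
      _ = Real.log x / Real.log 2 := rfl
      _ ≤ (x : ℝ) ^ ε / ε / Real.log 2 := by gcongr; exact Real.log_le_rpow_div (by positivity) hε
      _ = (x : ℝ) ^ ε / (ε * Real.log 2) := by rw [div_div]
  have hone : (1 : ℝ) ≤ (x : ℝ) ^ ε := Real.one_le_rpow hx' hε.le
  calc (Nat.log 2 x + 1 : ℝ) ≤ (x : ℝ) ^ ε / (ε * Real.log 2) + (x : ℝ) ^ ε := by linarith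
    _ = (1 / (ε * Real.log 2) + 1) * (x : ℝ) ^ ε := by ring

lemma exists_log_Pk_le_mul_sqrt {k : ℕ} (hk : 1 ≤ k) :
    ∃ C, ∀ l, Real.log (Pk k l) ≤ C * √l := by
  set ε : ℝ := 1 / (2 * k)
  set c : ℝ := 1 / (ε * Real.log 2) + 1
  have hε : 0 < ε := by positivity
  refine ⟨c ^ k * Real.log 2, fun l => ?_⟩
  have hPk : Real.log (Pk k l) ≤ #{m ∈ Icc 1 l | SmoothNat k m} * Real.log 2 := by
    rw [← Real.log_pow]
    exact Real.log_le_log (by exact_mod_cast one_le_Pk k l) (by exact_mod_cast Pk_le_two_pow k l)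
  refine hPk.trans ?_
  rcases Nat.eq_zero_or_pos l with rfl | hl
  · simp
  calc (#{m ∈ Icc 1 l | SmoothNat k m} : ℝ) * Real.log 2
      ≤ (Nat.log 2 l + 1 : ℝ) ^ k * Real.log 2 := by
        gcongr
        exact_mod_cast card_smoothNat_le hk l
    _ ≤ (c * (l : ℝ) ^ ε) ^ k * Real.log 2 := by
        gcongr
        exact natLog_two_add_one_le hε hl
    _ = c ^ k * Real.log 2 * √l := by
        rw [mul_pow, ← Real.rpow_natCast ((l : ℝ) ^ ε), ← Real.rpow_mul (by positivity),
          Real.sqrt_eq_rpow, show ε * k = 1 / 2 by simp only [ε]; field_simp]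
        ring

lemma card_filter_coprime_Ico_add_mul (D a q : ℕ) :
    #{x ∈ Ico a (a + D * q) | D.Coprime x} = q * Nat.totient D := by
  induction q with
  | zero => simp
  | succ q ih =>
    rw [mul_add_one, ← add_assoc, ← Finset.Ico_union_Ico_eq_Ico (Nat.le_add_right a _)
      (Nat.le_add_right _ D), Finset.filter_union, Finset.card_union_of_disjoint
      (Finset.disjoint_filter_filter (Finset.Ico_disjoint_Ico_consecutive _ _ _)), ih,
      Nat.filter_coprime_Ico_eq_totient]
    ring

lemma abs_card_filter_coprime_Ico_sub_le {D : ℕ} (hD : 0 < D) {a b : ℕ} (hab : a ≤ b) :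
    |(#{x ∈ Ico a b | D.Coprime x} : ℝ) - ((b : ℝ) - a) * Nat.totient D / D| ≤ D := by
  obtain ⟨m, rfl⟩ := Nat.exists_eq_add_of_le hab
  set q := m / D
  set r := m % D
  have hm : m = D * q + r := (Nat.div_add_mod m D).symm
  have hsplit := Finset.Ico_union_Ico_eq_Ico (Nat.le_add_right a (D * q))
    (Nat.le_add_right (a + D * q) r)
  rw [hm, ← add_assoc, ← hsplit, Finset.filter_union, Finset.card_union_of_disjoint
    (Finset.disjoint_filter_filter (Finset.Ico_disjoint_Ico_consecutive _ _ _)),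
    card_filter_coprime_Ico_add_mul]
  set c := #{x ∈ Ico (a + D * q) (a + D * q + r) | D.Coprime x}
  have hrD : (r : ℝ) < D := by exact_mod_cast Nat.mod_lt m hD
  have hD' : (0 : ℝ) < D := by exact_mod_cast hD
  have hφ : (Nat.totient D : ℝ) ≤ D := by exact_mod_cast Nat.totient_le D
  have hrφ : r * (Nat.totient D : ℝ) / D ≤ r := by
    rw [div_le_iff₀ hD']
    exact mul_le_mul_of_nonneg_left hφ (Nat.cast_nonneg r)
  have hc : (c : ℝ) ≤ r := by exact_mod_cast (Finset.card_filter_le _ _).trans (by simp)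
  have key : ((q * Nat.totient D + c : ℕ) : ℝ) - ((a + D * q + r : ℕ) - a) * Nat.totient D / D
      = c - r * Nat.totient D / D := by
    push_cast
    field_simp
    ring
  rw [key, abs_le]
  constructor <;> linarith [show (0 : ℝ) ≤ r * Nat.totient D / D by positivity]

noncomputable def floorCount (D n l : ℕ) : ℕ := #{t ∈ coprimeUpTo D n | n / t = l}

noncomputable def floorDensity (D l : ℕ) : ℝ := (1 / l - 1 / (l + 1)) * Nat.totient D / D

lemma div_eq_iff_div_succ_lt_and_le {n l t : ℕ} (hl : 0 < l) (ht : 0 < t) :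
    n / t = l ↔ n / (l + 1) < t ∧ t ≤ n / l := by
  rw [Nat.div_eq_iff ht, Nat.div_lt_iff_lt_mul (Nat.succ_pos l), Nat.le_div_iff_mul_le hl,
    mul_comm l t, Nat.mul_succ]
  omega

lemma floorCount_eq_card_Ico (D n : ℕ) {l : ℕ} (hl : 0 < l) :
    floorCount D n l = #{t ∈ Ico (n / (l + 1) + 1) (n / l + 1) | D.Coprime t} := by
  rw [floorCount]
  congr 1
  ext t
  simp only [coprimeUpTo, Finset.mem_filter, Finset.mem_Icc, Finset.mem_Ico]
  constructor
  · rintro ⟨⟨⟨ht1, -⟩, hD⟩, hnt⟩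
    have := (div_eq_iff_div_succ_lt_and_le hl ht1).mp hnt
    exact ⟨by omega, hD⟩
  · rintro ⟨⟨hlo, hhi⟩, hD⟩
    have htn : t ≤ n := by have := Nat.div_le_self n l; omega
    have ht1 : 0 < t := (Nat.succ_pos _).trans_le hlo
    exact ⟨⟨⟨ht1, htn⟩, hD⟩, (div_eq_iff_div_succ_lt_and_le hl ht1).mpr ⟨by omega, by omega⟩⟩

lemma abs_floorCount_sub_le {D : ℕ} (hD : 0 < D) (n : ℕ) {l : ℕ} (hl : 0 < l) :
    |(floorCount D n l : ℝ) - n * floorDensity D l| ≤ D + 1 := by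
  have hab : n / (l + 1) + 1 ≤ n / l + 1 := by
    have := Nat.div_le_div_left (Nat.le_add_right l 1) hl (a := n)
    omega
  have hcount := abs_card_filter_coprime_Ico_sub_le hD hab
  rw [← floorCount_eq_card_Ico D n hl] at hcount
  push_cast at hcount
  have hfloor (m : ℕ) : ((n / m : ℕ) : ℝ) ≤ (n : ℝ) / m ∧ (n : ℝ) / m < (n / m : ℕ) + 1 := by
    rw [← Nat.floor_div_eq_div (K := ℝ)]
    exact ⟨Nat.floor_le (by positivity), Nat.lt_floor_add_one _⟩
  obtain ⟨h₁, h₁'⟩ := hfloor l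
  obtain ⟨h₂, h₂'⟩ := hfloor (l + 1)
  push_cast at h₂ h₂'
  set ρ := (Nat.totient D : ℝ) / D
  have hρ0 : 0 ≤ ρ := by positivity
  have hρ1 : ρ ≤ 1 := (div_le_one (by exact_mod_cast hD)).mpr (by exact_mod_cast Nat.totient_le D)
  set e := ((n / l : ℕ) : ℝ) - (n / (l + 1) : ℕ) - ((n : ℝ) / l - n / (l + 1))
  have he : |e * ρ| ≤ 1 := by
    rw [abs_mul, abs_of_nonneg hρ0]
    exact mul_le_one₀ (abs_le.mpr ⟨by linarith, by linarith⟩) hρ0 hρ1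
  calc |(floorCount D n l : ℝ) - n * floorDensity D l|
      = |((floorCount D n l : ℝ) - ((n / l : ℕ) + 1 - ((n / (l + 1) : ℕ) + 1)) * Nat.totient D / D)
          + e * ρ| := by
        congr 1
        simp only [e, ρ, floorDensity]
        ring
    _ ≤ D + 1 := (abs_add_le _ _).trans (add_le_add hcount he)

lemma tendsto_floorCount_div {D : ℕ} (hD : 0 < D) {l : ℕ} (hl : 0 < l) :
    Tendsto (fun n : ℕ => (floorCount D n l : ℝ) / n) atTop (nhds (floorDensity D l)) := by
  refine tendsto_iff_norm_sub_tendsto_zero.mpr (squeeze_zero_norm' ?_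
    (tendsto_const_div_atTop_nhds_zero_nat ((D : ℝ) + 1)))
  filter_upwards [eventually_gt_atTop 0] with n hn
  have hn' : (0 : ℝ) < n := by exact_mod_cast hn
  rw [norm_norm, Real.norm_eq_abs, le_div_iff₀ hn', ← abs_of_pos hn', ← abs_mul, abs_of_pos hn',
    sub_mul, div_mul_cancel₀ _ hn'.ne', mul_comm _ (n : ℝ)]
  exact abs_floorCount_sub_le hD n hl

lemma sum_Icc_inv_sqrt_le (M : ℕ) : ∑ t ∈ Icc 1 M, 1 / √t ≤ 2 * √M := by
  induction M with
  | zero => simp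
  | succ M ih =>
    rw [Finset.sum_Icc_succ_top (by omega)]
    have hM : 0 < √((M + 1 : ℕ) : ℝ) := Real.sqrt_pos.mpr (by positivity)
    have hstep : √(M : ℝ) ≤ √((M + 1 : ℕ) : ℝ) := Real.sqrt_le_sqrt (by push_cast; linarith)
    have hsq : √((M + 1 : ℕ) : ℝ) * √((M + 1 : ℕ) : ℝ) = (M : ℝ) + 1 := by
      rw [Real.mul_self_sqrt (by positivity)]
      push_cast
      ring
    have hsq' : √(M : ℝ) * √(M : ℝ) = M := Real.mul_self_sqrt (by positivity)
    have key : 1 / √((M + 1 : ℕ) : ℝ) ≤ 2 * √((M + 1 : ℕ) : ℝ) - 2 * √M := by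
      rw [div_le_iff₀ hM]
      nlinarith [sq_nonneg (√((M + 1 : ℕ) : ℝ) - √M)]
    linarith

lemma floorDensity_nonneg (D : ℕ) {l : ℕ} (hl : 0 < l) : 0 ≤ floorDensity D l := by
  have : (1 : ℝ) / (l + 1) ≤ 1 / l := one_div_le_one_div_of_le (by positivity) (by linarith)
  unfold floorDensity
  have := sub_nonneg.mpr this
  positivity

lemma floorDensity_le {D : ℕ} (hD : 0 < D) {l : ℕ} (hl : 0 < l) :
    floorDensity D l ≤ 1 / (l : ℝ) ^ 2 := by
  have hD' : (0 : ℝ) < D := by exact_mod_cast hD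
  have hl' : (0 : ℝ) < l := by exact_mod_cast hl
  have hρ : (Nat.totient D : ℝ) / D ≤ 1 := by
    rw [div_le_one hD']
    exact_mod_cast Nat.totient_le D
  calc floorDensity D l = 1 / (l * (l + 1)) * ((Nat.totient D : ℝ) / D) := by
        simp only [floorDensity]
        field_simp
        ring
    _ ≤ 1 / (l * (l + 1)) * 1 := by gcongr
    _ ≤ 1 / (l : ℝ) ^ 2 := by
        rw [mul_one]
        exact one_div_le_one_div_of_le (by positivity) (by nlinarith)

lemma summable_floorDensity_mul {D : ℕ} (hD : 0 < D) {a : ℕ → ℝ} {C : ℝ}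
    (ha : ∀ l, 0 ≤ a l) (haC : ∀ l, a l ≤ C * √l) :
    Summable fun l => floorDensity D (l + 1) * a (l + 1) := by
  refine Summable.of_nonneg_of_le (fun l => mul_nonneg (floorDensity_nonneg D l.succ_pos) (ha _))
    (fun l => ?_) (((summable_nat_add_iff 1).mpr
      (Real.summable_one_div_nat_rpow.mpr (by norm_num : (1 : ℝ) < 3 / 2))).mul_left C)
  have hx : (0 : ℝ) < (l + 1 : ℕ) := by positivity
  have hsqrt : 0 < √((l + 1 : ℕ) : ℝ) := Real.sqrt_pos.mpr hx
  have hpow : ((l + 1 : ℕ) : ℝ) ^ (3 / 2 : ℝ) = (l + 1 : ℕ) * √((l + 1 : ℕ) : ℝ) := by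
    rw [show (3 / 2 : ℝ) = 1 + 1 / 2 by norm_num, Real.rpow_add hx, Real.rpow_one,
      Real.sqrt_eq_rpow]
  calc floorDensity D (l + 1) * a (l + 1)
      ≤ 1 / ((l + 1 : ℕ) : ℝ) ^ 2 * (C * √((l + 1 : ℕ) : ℝ)) :=
        mul_le_mul (floorDensity_le hD l.succ_pos) (haC _) (ha _) (by positivity)
    _ = C * (1 / ((l + 1 : ℕ) : ℝ) ^ (3 / 2 : ℝ)) := by
        rw [hpow]
        field_simp
        rw [Real.sq_sqrt hx.le]
        ring

lemma sum_coprimeUpTo_eq_add (D n L : ℕ) (a : ℕ → ℝ) :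
    ∑ t ∈ coprimeUpTo D n, a (n / t)
      = ∑ l ∈ range L, (floorCount D n (l + 1) : ℝ) * a (l + 1)
        + ∑ t ∈ coprimeUpTo D n with L < n / t, a (n / t) := by
  have hdiv : ∀ t ∈ coprimeUpTo D n, 1 ≤ n / t := fun t ht => by
    simp only [coprimeUpTo, Finset.mem_filter, Finset.mem_Icc] at ht
    exact (Nat.one_le_div_iff ht.1.1).mpr ht.1.2
  simp only [← not_le]
  rw [← Finset.sum_filter_add_sum_filter_not _ (fun t => n / t ≤ L)]
  congr 1
  rw [← Finset.sum_fiberwise_of_maps_to (g := fun t => n / t - 1) (t := range L) fun t ht => by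
    have := hdiv t (Finset.mem_filter.mp ht).1
    simp only [Finset.mem_range]
    have := (Finset.mem_filter.mp ht).2
    omega]
  refine Finset.sum_congr rfl fun l hl => ?_
  have hfiber : {t ∈ coprimeUpTo D n | n / t ≤ L ∧ n / t - 1 = l}
      = {t ∈ coprimeUpTo D n | n / t = l + 1} := Finset.filter_congr fun t ht => by
    have := hdiv t ht
    have := Finset.mem_range.mp hl
    omega
  rw [Finset.filter_filter, hfiber, Finset.sum_congr rfl fun t ht =>
    congrArg a (Finset.mem_filter.mp ht).2, Finset.sum_const, nsmul_eq_mul, floorCount]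

lemma sum_coprimeUpTo_filter_lt_div_le {D : ℕ} {a : ℕ → ℝ} {C : ℝ} (hC : 0 ≤ C) (haC : ∀ l, a l ≤ C * √l)
    (n L : ℕ) :
    ∑ t ∈ coprimeUpTo D n with L < n / t, a (n / t) ≤ 2 * C * n / √(L + 1) := by
  set M := n / (L + 1)
  have hsub : {t ∈ coprimeUpTo D n | L < n / t} ⊆ Icc 1 M := fun t ht => by
    simp only [coprimeUpTo, Finset.mem_filter, Finset.mem_Icc] at ht ⊢
    obtain ⟨⟨⟨ht1, -⟩, -⟩, hL⟩ := ht
    refine ⟨ht1, (Nat.le_div_iff_mul_le L.succ_pos).mpr ?_⟩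
    rw [mul_comm]
    exact (Nat.le_div_iff_mul_le ht1).mp hL
  have hterm (t : ℕ) : a (n / t) ≤ C * √n * (1 / √t) := by
    calc a (n / t) ≤ C * √((n / t : ℕ) : ℝ) := haC _
      _ ≤ C * √((n : ℝ) / t) := by gcongr; exact Nat.cast_div_le
      _ = C * √n * (1 / √t) := by rw [Real.sqrt_div' _ (Nat.cast_nonneg t)]; ring
  have hM : √(M : ℝ) ≤ √n / √(L + 1) := by
    rw [← Real.sqrt_div' _ (by positivity)]
    refine Real.sqrt_le_sqrt ?_
    exact_mod_cast (Nat.cast_div_le (α := ℝ) (m := n) (n := L + 1))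
  calc ∑ t ∈ coprimeUpTo D n with L < n / t, a (n / t)
      ≤ ∑ t ∈ coprimeUpTo D n with L < n / t, C * √n * (1 / √t) :=
        Finset.sum_le_sum fun t _ => hterm t
    _ ≤ ∑ t ∈ Icc 1 M, C * √n * (1 / √t) :=
        Finset.sum_le_sum_of_subset_of_nonneg hsub fun _ _ _ => by positivity
    _ = C * √n * ∑ t ∈ Icc 1 M, 1 / √t := (Finset.mul_sum _ _ _).symm
    _ ≤ C * √n * (2 * (√n / √(L + 1))) := by
        gcongr
        exact (sum_Icc_inv_sqrt_le M).trans (by gcongr)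
    _ = 2 * C * n / √(L + 1) := by
        rw [mul_comm 2, ← mul_assoc, mul_assoc C, ← mul_div_assoc,
          Real.mul_self_sqrt (Nat.cast_nonneg n)]
        ring

lemma tendsto_of_forall_eventually_dist_le {ι α : Type*} [PseudoMetricSpace α] {l : Filter ι}
    {F : ι → α} {G : ℕ → ι → α} {g : ℕ → α} {S : α} {e : ℕ → ℝ}
    (hG : ∀ L, Tendsto (G L) l (nhds (g L))) (hg : Tendsto g atTop (nhds S))
    (he : Tendsto e atTop (nhds 0)) (hFG : ∀ L, ∀ᶠ i in l, dist (F i) (G L i) ≤ e L) :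
    Tendsto F l (nhds S) := by
  refine Metric.tendsto_nhds.mpr fun ε hε => ?_
  obtain ⟨L, heL, hgL⟩ := ((he.eventually (gt_mem_nhds (by positivity : 0 < ε / 3))).and
    (Metric.tendsto_nhds.mp hg _ (by positivity : 0 < ε / 3))).exists
  filter_upwards [hFG L, Metric.tendsto_nhds.mp (hG L) _ (by positivity : 0 < ε / 3)]
    with i hFGi hGi
  calc dist (F i) S ≤ dist (F i) (G L i) + dist (G L i) (g L) + dist (g L) S :=
        dist_triangle4 _ _ _ _
    _ < ε := by linarith

theorem tendsto_inv_mul_sum_coprimeUpTo {D : ℕ} (hD : 0 < D) {a : ℕ → ℝ} {C : ℝ}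
    (ha : ∀ l, 0 ≤ a l) (haC : ∀ l, a l ≤ C * √l) :
    Tendsto (fun n : ℕ => (n : ℝ)⁻¹ * ∑ t ∈ coprimeUpTo D n, a (n / t)) atTop
      (nhds (∑' l, floorDensity D (l + 1) * a (l + 1))) := by
  have hC : 0 ≤ C := by simpa using (ha 1).trans (haC 1)
  refine tendsto_of_forall_eventually_dist_le
    (G := fun L n => ∑ l ∈ range L, (floorCount D n (l + 1) : ℝ) / n * a (l + 1))
    (e := fun L => 2 * C / √((L : ℝ) + 1))
    (fun L => tendsto_finsetSum _ fun l _ => (tendsto_floorCount_div hD l.succ_pos).mul_const _)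
    (summable_floorDensity_mul hD ha haC).hasSum.tendsto_sum_nat ?_ fun L => ?_
  · exact tendsto_const_nhds.div_atTop (Real.tendsto_sqrt_atTop.comp
      (tendsto_atTop_add_const_right _ 1 tendsto_natCast_atTop_atTop))
  filter_upwards [eventually_gt_atTop 0] with n hn
  have hn' : (0 : ℝ) < n := by exact_mod_cast hn
  have htail := sum_coprimeUpTo_filter_lt_div_le (D := D) hC haC n L
  have htail0 : 0 ≤ ∑ t ∈ coprimeUpTo D n with L < n / t, a (n / t) :=
    Finset.sum_nonneg fun _ _ => ha _
  have hhead : ∑ l ∈ range L, (n : ℝ)⁻¹ * (floorCount D n (l + 1) * a (l + 1))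
      = ∑ l ∈ range L, (floorCount D n (l + 1) : ℝ) / n * a (l + 1) :=
    Finset.sum_congr rfl fun _ _ => by ring
  rw [sum_coprimeUpTo_eq_add D n L a, mul_add, Finset.mul_sum, hhead, Real.dist_eq,
    add_sub_cancel_left, abs_of_nonneg (by positivity)]
  calc (n : ℝ)⁻¹ * ∑ t ∈ coprimeUpTo D n with L < n / t, a (n / t)
      ≤ (n : ℝ)⁻¹ * (2 * C * n / √(L + 1)) := by gcongr
    _ = 2 * C / √((L : ℝ) + 1) := by field_simp

/-- For each fixed `k ≥ 1`, `lim_n f(n,k)^{1/n}` exists and equals the convergent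
infinite product `∏_l P_k(l)^{(1/l - 1/(l+1)) φ(Dk)/Dk}`. -/
theorem stmt_15 (k : ℕ) (hk : 1 ≤ k) :
    ∃ L : ℝ,
      HasProd (fun l : ℕ => (Pk k (l + 1) : ℝ) ^
        (((1 : ℝ) / (l + 1) - 1 / (l + 2)) * (Nat.totient (Dk k)) / (Dk k))) L ∧
      Tendsto (fun n : ℕ => (fk n k : ℝ) ^ ((1 : ℝ) / n)) atTop (nhds L) := by
  obtain ⟨C, hC⟩ := exists_log_Pk_le_mul_sqrt hk
  have hPk (l : ℕ) : (0 : ℝ) < Pk k l := by exact_mod_cast one_le_Pk k l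
  have ha (l : ℕ) : 0 ≤ Real.log (Pk k l) := Real.log_nonneg (by exact_mod_cast one_le_Pk k l)
  refine ⟨Real.exp (∑' l, floorDensity (Dk k) (l + 1) * Real.log (Pk k (l + 1))), ?_, ?_⟩
  · convert (summable_floorDensity_mul (Dk_pos k) ha hC).hasSum.rexp using 1
    funext l
    rw [Function.comp_apply, Real.rpow_def_of_pos (hPk _), floorDensity]
    congr 1
    push_cast
    ring
  · refine ((tendsto_inv_mul_sum_coprimeUpTo (Dk_pos k) ha hC).rexp).congr fun n => ?_
    have hfk : (fk n k : ℝ) = ∏ t ∈ coprimeUpTo (Dk k) n, (Pk k (n / t) : ℝ) := by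
      exact_mod_cast fk_eq_prod hk n
    rw [Real.rpow_def_of_pos (hfk ▸ Finset.prod_pos fun t _ => hPk _), hfk,
      Real.log_prod fun t _ => (hPk _).ne', one_div, mul_comm]
end
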